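/- arXiv:0810.0862 — 3 statements merged into one kernel-verified Lean document; each statement's English description precedes it below -/
import Mathlib

section
/- For v ∈ S, every characteristic vector (K,t) of G, and every j ∈ ℤ, r((K,t+2j),S) = r((K,t),S) + j. -/
/-!
Common setup: the lattice cohomology complex of a weighted graph
(Némethi; J. Greene, "A surgery triangle for lattice cohomology").

A finite graph `G` with integer weights on vertices and signs on (multi-)edges is
encoded by its symmetric incidence data `M : V → V → ℤ`: for `u ≠ w` the entry
`M u w` is the signed number of edges joining `u` and `w`, and `M u u = m(u)` is
the weight of `u`.  This is exactly the data of the intersection pairing `(·,·)`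
on `L(G) = ℤ⟨E_u : u ∈ V⟩`, via `M u w = (E_u, E_w)`.
-/

noncomputable section

open Function

/-- A graph with integer vertex weights and signed multi-edges, encoded by the
symmetric pairing data `M u w = (E_u, E_w)` on `L(G)`. -/
structure WGraph (V : Type*) where
  M : V → V → ℤ
  symm : ∀ u w, M u w = M w u

variable {V : Type*} [Fintype V] [DecidableEq V]

/-- Evaluation of `K ∈ Hom(L(G), ℤ)` (recorded by its components `K u = K(E_u)`)
on a lattice vector `x = ∑ x_u E_u ∈ L(G)`. -/
def evalK (K x : V → ℤ) : ℤ := ∑ u, K u * x u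

/-- `E_T = ∑_{j ∈ T} E_j ∈ L(G)`. -/
def eVec (T : Finset V) : V → ℤ := fun u => if u ∈ T then 1 else 0

/-- Splitting a sum over `V` at a vertex `v`. -/
theorem sum_split (v : V) (f : V → ℤ) :
    ∑ u, f u = f v + ∑ u : {u : V // u ≠ v}, f u.1 := by
  rw [Fintype.sum_eq_add_sum_compl v f]
  congr 1
  exact Finset.sum_subtype _ (fun x => by simp) f

namespace WGraph

/-- The symmetric bilinear pairing `(x, y)` on `L(G)`. -/
def pair (G : WGraph V) (x y : V → ℤ) : ℤ := ∑ u, ∑ w, G.M u w * x u * y w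

/-- `K ∈ Hom(L(G),ℤ)` is characteristic: `(K,x) ≡ (x,x) (mod 2)` for all `x ∈ L(G)`. -/
def IsChar (G : WGraph V) (K : V → ℤ) : Prop :=
  ∀ x : V → ℤ, evalK K x ≡ G.pair x x [ZMOD 2]

/-- The set `Char(G)` of characteristic vectors, as a type. -/
def Ch (G : WGraph V) : Type _ := {K : V → ℤ // G.IsChar K}

/-- `K + 2x ∈ Hom(L(G),ℤ)`, for `K ∈ Hom(L(G),ℤ)` and `x ∈ L(G)` (a lattice vector
is viewed in `Hom(L(G),ℤ)` via the pairing). -/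
def chAdd (G : WGraph V) (K x : V → ℤ) : V → ℤ := fun u => K u + 2 * G.pair x (eVec {u})

/-- The difference `q(K + 2x) − q(K) = −((K,x) + (x,x))/2`, where `q(y) = −(y,y)/8`;
it is an integer whenever `K` is characteristic. -/
def qdiff (G : WGraph V) (K x : V → ℤ) : ℤ := (-(evalK K x + G.pair x x)) / 2

/-- The difference `q(K,S) − q(K) = max { q(K + 2E_T) − q(K) : T ⊆ S }`, where
`q(K,S) = max { q(K + 2 ∑_{j∈T} E_j) : T ⊆ S }`. -/
def qrel (G : WGraph V) (K : V → ℤ) (S : Finset V) : ℤ :=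
  S.powerset.sup' (Finset.powerset_nonempty S) fun T => G.qdiff K (eVec T)

/-- `G₊₁(v)`: increase the weight `m(v)` of the vertex `v` by one. -/
def bump (G : WGraph V) (v : V) : WGraph V where
  M u w := if u = v ∧ w = v then G.M u w + 1 else G.M u w
  symm u w := by
    have h := G.symm u w
    by_cases hu : u = v <;> by_cases hw : w = v <;> simp [hu, hw, h] <;>
      exact G.symm _ _

/-- `G − v`: delete the vertex `v` and all incident edges. -/
def delete (G : WGraph V) (v : V) : WGraph {u : V // u ≠ v} where
  M u w := G.M u.1 w.1
  symm u w := G.symm u.1 w.1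

theorem evalK_update (L y : V → ℤ) (v : V) (c : ℤ) :
    evalK (Function.update L v (L v + c)) y = evalK L y + c * y v := by
  unfold evalK
  have h : ∀ u, Function.update L v (L v + c) u * y u
      = L u * y u + (if u = v then c * y u else 0) := by
    intro u
    rcases eq_or_ne u v with hu | hu <;> simp [hu, Function.update] <;> ring
  simp only [h]
  rw [Finset.sum_add_distrib, Finset.sum_ite_eq' Finset.univ v (fun u => c * y u)]
  simp

theorem IsChar.chAdd {G : WGraph V} {K : V → ℤ} (h : G.IsChar K) (x : V → ℤ) :
    G.IsChar (G.chAdd K x) := by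
  intro y
  have key : evalK (G.chAdd K x) y
      = evalK K y + 2 * ∑ u, G.pair x (eVec {u}) * y u := by
    simp only [evalK, WGraph.chAdd, add_mul, mul_assoc]
    rw [Finset.sum_add_distrib, ← Finset.mul_sum]
  have hy := h y
  simp only [Int.ModEq] at hy ⊢
  rw [key]
  omega

theorem pair_bump (G : WGraph V) (v : V) (y : V → ℤ) :
    (G.bump v).pair y y = G.pair y y + y v * y v := by
  unfold pair bump
  have hu : ∀ u w : V, ((if u = v ∧ w = v then G.M u w + 1 else G.M u w) * y u * y w)
      = G.M u w * y u * y w + (if u = v ∧ w = v then y u * y w else 0) := by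
    intro u w
    rcases eq_or_ne u v with h | h <;> rcases eq_or_ne w v with h' | h' <;>
      simp [h, h'] <;> ring
  simp only [hu, Finset.sum_add_distrib]
  congr 1
  have hin : ∀ u : V, (∑ w, if u = v ∧ w = v then y u * y w else 0)
      = if u = v then y u * y v else 0 := by
    intro u
    rcases eq_or_ne u v with h | h
    · simp [h, Finset.sum_ite_eq' Finset.univ v (fun w => y v * y w)]
    · simp [h]
  rw [Finset.sum_congr rfl (fun u _ => hin u),
    Finset.sum_ite_eq' Finset.univ v (fun u => y u * y v)]
  simp

theorem IsChar.bumpUpdate {G : WGraph V} {L : V → ℤ} (h : G.IsChar L) (v : V) (i : ℤ) :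
    (G.bump v).IsChar (Function.update L v (L v + (2 * i + 1))) := by
  intro y
  have h1 := evalK_update L y v (2 * i + 1)
  have h2 := pair_bump G v y
  have hy := h y
  obtain ⟨k, hk⟩ := Int.even_mul_succ_self (y v - 1)
  have hk' : y v * y v - y v = 2 * k := by
    have h5 : (y v - 1) * (y v - 1 + 1) = y v * y v - y v := by ring
    omega
  have h3 : (2 * i + 1) * y v = 2 * (i * y v) + y v := by ring
  simp only [Int.ModEq] at hy ⊢
  rw [h1, h2, h3]
  omega

theorem IsChar.evenUpdate {G : WGraph V} {L : V → ℤ} (h : G.IsChar L) (v : V) (k : ℤ) :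
    G.IsChar (Function.update L v (L v + 2 * k)) := by
  intro y
  have h1 := evalK_update L y v (2 * k)
  have hy := h y
  have h3 : 2 * k * y v = 2 * (k * y v) := by ring
  simp only [Int.ModEq] at hy ⊢
  rw [h1, h3]
  omega

end WGraph

/-- Extension of `K ∈ Hom(L(G−v),ℤ)` to `Hom(L(G),ℤ)` by the value `t` at `v`:
the vector denoted `(K, t)`. -/
def extV (v : V) (K : {u : V // u ≠ v} → ℤ) (t : ℤ) : V → ℤ :=
  fun u => if h : u = v then t else K ⟨u, h⟩

namespace WGraph

theorem IsChar.extChar {G : WGraph V} {v : V} {K : {u : V // u ≠ v} → ℤ}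
    (h : (G.delete v).IsChar K) {t : ℤ} (ht : t ≡ G.M v v [ZMOD 2]) :
    G.IsChar (extV v K t) := by
  intro y
  have h1 : evalK (extV v K t) y = t * y v + evalK K (fun u => y u.1) := by
    unfold evalK
    rw [sum_split v (fun u => extV v K t u * y u)]
    congr 1
    · simp [extV]
    · exact Finset.sum_congr rfl fun u _ => by simp [extV, u.2]
  have h2 : G.pair y y = (G.delete v).pair (fun u => y u.1) (fun u => y u.1)
      + G.M v v * (y v * y v)
      + 2 * ∑ u : {u : V // u ≠ v}, G.M v u.1 * y v * y u.1 := by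
    have step1 : G.pair y y = (∑ w, G.M v w * y v * y w)
        + ∑ u : {u : V // u ≠ v}, ∑ w, G.M u.1 w * y u.1 * y w :=
      sum_split v (fun u => ∑ w, G.M u w * y u * y w)
    have step2 : (∑ w, G.M v w * y v * y w)
        = G.M v v * y v * y v + ∑ w : {w : V // w ≠ v}, G.M v w.1 * y v * y w.1 :=
      sum_split v _
    have step3 : ∀ u : {u : V // u ≠ v}, (∑ w, G.M u.1 w * y u.1 * y w)
        = G.M u.1 v * y u.1 * y v + ∑ w : {w : V // w ≠ v}, G.M u.1 w.1 * y u.1 * y w.1 :=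
      fun u => sum_split v _
    have step4 : (G.delete v).pair (fun u => y u.1) (fun u => y u.1)
        = ∑ u : {u : V // u ≠ v}, ∑ w : {w : V // w ≠ v}, G.M u.1 w.1 * y u.1 * y w.1 := rfl
    have hc : (∑ u : {u : V // u ≠ v}, G.M u.1 v * y u.1 * y v)
        = ∑ u : {u : V // u ≠ v}, G.M v u.1 * y v * y u.1 := by
      refine Finset.sum_congr rfl fun u _ => ?_
      rw [G.symm u.1 v]; ring
    rw [step1, step2, Finset.sum_congr rfl (fun u _ => step3 u),
      Finset.sum_add_distrib, hc, step4]
    ring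
  have hy := h (fun u => y u.1)
  obtain ⟨k, hk⟩ := Int.even_mul_succ_self (y v - 1)
  have hk' : y v * y v - y v = 2 * k := by
    have h5 : (y v - 1) * (y v - 1 + 1) = y v * y v - y v := by ring
    omega
  obtain ⟨a, ha⟩ : (2:ℤ) ∣ t - G.M v v := Int.ModEq.dvd ht.symm
  have e1 : t * y v = G.M v v * y v + 2 * (a * y v) := by
    have h6 : t = G.M v v + 2 * a := by omega
    rw [h6]; ring
  have e2 : G.M v v * (y v * y v) = G.M v v * y v + 2 * (G.M v v * k) := by
    have h7 : y v * y v = y v + 2 * k := by omega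
    rw [h7]; ring
  simp only [Int.ModEq] at hy ⊢
  rw [h1, h2, e1, e2]
  omega

variable {G : WGraph V}

/-- `K + 2x` as a characteristic vector. -/
def Ch.add (K : G.Ch) (x : V → ℤ) : G.Ch := ⟨G.chAdd K.1 x, K.2.chAdd x⟩

/-- For `K = (K', t) ∈ Char(G)`, the characteristic vector
`(K', t + 2i + 1) ∈ Char(G₊₁(v))`. -/
def Ch.bumpSh (K : G.Ch) (v : V) (i : ℤ) : (G.bump v).Ch :=
  ⟨Function.update K.1 v (K.1 v + (2 * i + 1)), K.2.bumpUpdate v i⟩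

/-- For `K = (K', t) ∈ Char(G)`, the characteristic vector `(K', t + 2k) ∈ Char(G)`. -/
def Ch.evenSh (K : G.Ch) (v : V) (k : ℤ) : G.Ch :=
  ⟨Function.update K.1 v (K.1 v + 2 * k), K.2.evenUpdate v k⟩

/-- For `K ∈ Char(G−v)`, the characteristic vector `(K, m(v) + 2i) ∈ Char(G)`. -/
def Ch.extend {v : V} (K : (G.delete v).Ch) (i : ℤ) : G.Ch :=
  ⟨extV v K.1 (G.M v v + 2 * i),
    K.2.extChar (by show (G.M v v + 2 * i) % 2 = G.M v v % 2; omega)⟩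

end WGraph

/-- `𝒯⁺₀ = 𝔽[U,U⁻¹]/(U·𝔽[U])` over `𝔽 = ℤ/2ℤ`: the coefficient at `d ∈ ℕ` records
the coefficient of `U^{−d}`. -/
def Tplus : Type := ℕ →₀ ZMod 2

instance : AddCommGroup Tplus := inferInstanceAs (AddCommGroup (ℕ →₀ ZMod 2))
instance : Module (ZMod 2) Tplus := inferInstanceAs (Module (ZMod 2) (ℕ →₀ ZMod 2))

/-- The element `U^{-m}` of `𝒯⁺₀`. -/
def Um (m : ℕ) : Tplus := (Finsupp.single m 1 : ℕ →₀ ZMod 2)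

/-- Multiplication by `U^e` on `𝒯⁺₀`: `U^e · U^{−d} = U^{−(d−e)}` (which is `0` if `d < e`). -/
def Upow (e : ℤ) (f : Tplus) : Tplus :=
  (Finsupp.comapDomain (fun d : ℕ => (d : ℤ) + e)
    (Finsupp.embDomain ⟨(Nat.cast : ℕ → ℤ), Nat.cast_injective⟩ (f : ℕ →₀ ZMod 2))
    (fun a _ b _ hab => Nat.cast_injective (add_right_cancel hab)) : ℕ →₀ ZMod 2)

theorem Upow_zero (e : ℤ) : Upow e 0 = 0 := by
  show (Finsupp.comapDomain _ (Finsupp.embDomain _ (0 : ℕ →₀ ZMod 2)) _ : ℕ →₀ ZMod 2)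
    = (0 : ℕ →₀ ZMod 2)
  ext d
  simp

/-- `C⁺(G)`: the `𝔽[U]`-module of finitely supported maps `Char(G) × 𝒫(V) → 𝒯⁺₀`. -/
abbrev Cplus (G : WGraph V) : Type _ := (G.Ch × Finset V) →₀ Tplus

/-- The action of (multiplication by) `U` on `C⁺(G)`. -/
def UC (G : WGraph V) (φ : Cplus G) : Cplus G := Finsupp.mapRange (Upow 1) (Upow_zero 1) φ

/-- `U^{−m} · (K,S)^∨`: the element of `C⁺(G)` supported at the single pair `(K,S)`
with value `U^{−m}`. -/
def dual {G : WGraph V} (p : G.Ch × Finset V) (m : ℕ) : Cplus G :=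
  Finsupp.single p (Um m)

/-- The exponent `q(K,S) − q(K, S−w)`. -/
def dExp₁ (G : WGraph V) (K : V → ℤ) (S : Finset V) (w : V) : ℤ :=
  G.qrel K S - G.qrel K (S.erase w)

/-- The exponent `q(K,S) − q(K + 2E_w, S−w)`. -/
def dExp₂ (G : WGraph V) (K : V → ℤ) (S : Finset V) (w : V) : ℤ :=
  G.qrel K S - (G.qdiff K (eVec {w}) + G.qrel (G.chAdd K (eVec {w})) (S.erase w))

/-- `δ` is the operator on `C⁺(G)` given by
`δ(φ)(K,S) = ∑_{w∈S} [U^{q(K,S)−q(K,S−w)}·φ(K,S−w) + U^{q(K,S)−q(K+2E_w,S−w)}·φ(K+2E_w,S−w)]`. -/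
def IsDelta (G : WGraph V) (δ : Cplus G → Cplus G) : Prop :=
  ∀ (φ : Cplus G) (K : G.Ch) (S : Finset V),
    δ φ (K, S) = ∑ w ∈ S,
      (Upow (dExp₁ G K.1 S w) (φ (K, S.erase w))
        + Upow (dExp₂ G K.1 S w) (φ (K.add (eVec {w}), S.erase w)))

/-- The exponent
`c(i,(K,t),S) = [q((K,t),S) − q(K,t)] − [q'((K,t+2i+1),S) − q'(K,t+2i+1)] + i(i+1)/2`. -/
def cExp (G : WGraph V) (v : V) (i : ℤ) (K : G.Ch) (S : Finset V) : ℤ :=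
  G.qrel K.1 S - (G.bump v).qrel (K.bumpSh v i).1 S + i * (i + 1) / 2

/-- `A` is the map `C⁺(G₊₁(v)) → C⁺(G)` given by
`A(φ)((K,t),S) = ∑_{i∈ℤ} U^{c(i,(K,t),S)} · φ((K,t+2i+1),S)`. -/
def IsA (G : WGraph V) (v : V) (A : Cplus (G.bump v) → Cplus G) : Prop :=
  ∀ (φ : Cplus (G.bump v)) (K : G.Ch) (S : Finset V),
    A φ (K, S) = ∑ᶠ i : ℤ, Upow (cExp G v i K S) (φ (K.bumpSh v i, S))

/-- A subset `S ⊆ V − v` viewed as a subset of `V`. -/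
def liftS (v : V) (S : Finset {u : V // u ≠ v}) : Finset V :=
  S.map ⟨Subtype.val, Subtype.val_injective⟩

/-- `B` is the map `C⁺(G) → C⁺(G−v)` given by
`B(φ)(K,S) = ∑_{i∈ℤ} φ((K, m(v)+2i), S)`. -/
def IsB (G : WGraph V) (v : V) (B : Cplus G → Cplus (G.delete v)) : Prop :=
  ∀ (φ : Cplus G) (K : (G.delete v).Ch) (S : Finset {u : V // u ≠ v}),
    B φ (K, S) = ∑ᶠ i : ℤ, φ (K.extend i, liftS v S)

/-- `r((K,t),S) = q((K,t),S−v) − q((K,t)+2E_v,S−v)` (for `v ∈ S`). -/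
def rVal (G : WGraph V) (v : V) (K : G.Ch) (S : Finset V) : ℤ :=
  G.qrel K.1 (S.erase v)
    - (G.qdiff K.1 (eVec {v}) + G.qrel (G.chAdd K.1 (eVec {v})) (S.erase v))

/-- The lattice cohomology `ℍ⁺`: the homology of the complex `(C⁺, δ)`. -/
abbrev Hlat {G : WGraph V} (δ : Cplus G →ₗ[ZMod 2] Cplus G) : Type _ :=
  LinearMap.ker δ ⧸ (LinearMap.range δ).comap (LinearMap.ker δ).subtype

/-- `𝒟₁ ⊆ C⁺(G)`: the `𝔽`-submodule generated by the `U^{−m}·((K,t),S)^∨` with `v ∈ S`. -/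
def D1 (G : WGraph V) (v : V) : Submodule (ZMod 2) (Cplus G) :=
  Submodule.span (ZMod 2)
    {χ | ∃ (K : G.Ch) (S : Finset V) (m : ℕ), v ∈ S ∧ χ = dual (K, S) m}

/-- `𝒟₂ ⊆ C⁺(G)`: the `𝔽`-submodule generated by the
`U^{−m}·[((K,t),S)^∨ + ((K,t+2),S)^∨]` with `v ∉ S`. -/
def D2 (G : WGraph V) (v : V) : Submodule (ZMod 2) (Cplus G) :=
  Submodule.span (ZMod 2)
    {χ | ∃ (K : G.Ch) (S : Finset V) (m : ℕ), v ∉ S ∧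
      χ = dual (K, S) m + dual (K.evenSh v 1, S) m}


/-!
Changing `t` does not affect any `q((K,t) + 2E_T) − q(K,t)` with `T ⊆ S − v`, since `E_T` has no
`E_v`-component; hence both `q(·, S − v)` terms of `r` are unchanged, and only
`q((K,t) + 2E_v) − q(K,t) = −(t + m(v))/2` moves, by `−j`.
-/

namespace WGraph

omit [DecidableEq V] in
theorem evalK_congr {L₁ L₂ x : V → ℤ} (h : ∀ u, x u ≠ 0 → L₁ u = L₂ u) :
    evalK L₁ x = evalK L₂ x :=
  Finset.sum_congr rfl fun u _ => by
    by_cases hu : x u = 0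
    · simp [hu]
    · rw [h u hu]

theorem qdiff_congr (G : WGraph V) {L₁ L₂ x : V → ℤ} (h : ∀ u, x u ≠ 0 → L₁ u = L₂ u) :
    G.qdiff L₁ x = G.qdiff L₂ x := by
  rw [qdiff, qdiff, evalK_congr h]

theorem qrel_congr (G : WGraph V) {L₁ L₂ : V → ℤ} {S : Finset V}
    (h : ∀ u ∈ S, L₁ u = L₂ u) : G.qrel L₁ S = G.qrel L₂ S :=
  Finset.sup'_congr _ rfl fun T hT => G.qdiff_congr fun u hu => by
    by_cases huT : u ∈ T
    · exact h u (Finset.mem_powerset.mp hT huT)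
    · simp [eVec, huT] at hu

theorem qdiff_update_add_two_mul (G : WGraph V) (L x : V → ℤ) (v : V) (c : ℤ) :
    G.qdiff (update L v (L v + 2 * c)) x = G.qdiff L x - c * x v := by
  unfold qdiff
  rw [evalK_update, mul_assoc]
  omega

theorem Ch.evenSh_apply_of_ne {G : WGraph V} (K : G.Ch) {u v : V} (h : u ≠ v) (j : ℤ) :
    (K.evenSh v j).1 u = K.1 u :=
  update_of_ne h _ _

end WGraph

theorem rVal_shift_general (G : WGraph V) (v : V) (S : Finset V) (K : G.Ch) (j : ℤ) :
    rVal G v (K.evenSh v j) S = rVal G v K S + j := by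
  have off_v : ∀ u ∈ S.erase v, (K.evenSh v j).1 u = K.1 u := fun u hu =>
    K.evenSh_apply_of_ne (Finset.ne_of_mem_erase hu) j
  have qrel_eq := G.qrel_congr off_v
  have qrel_add_eq : G.qrel (G.chAdd (K.evenSh v j).1 (eVec {v})) (S.erase v)
      = G.qrel (G.chAdd K.1 (eVec {v})) (S.erase v) :=
    G.qrel_congr fun u hu => by simp only [WGraph.chAdd, off_v u hu]
  have qdiff_eq : G.qdiff (K.evenSh v j).1 (eVec {v}) = G.qdiff K.1 (eVec {v}) - j :=
    (G.qdiff_update_add_two_mul K.1 (eVec {v}) v j).trans (by simp [eVec])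
  rw [rVal, rVal, qrel_eq, qrel_add_eq, qdiff_eq]
  ring

/-- For `v ∈ S`, every characteristic vector `(K,t)` of `G`, and every
`j ∈ ℤ`, `r((K,t+2j),S) = r((K,t),S) + j`. -/
theorem rVal_shift (G : WGraph V) (v : V) (S : Finset V) (hv : v ∈ S) (K : G.Ch) (j : ℤ) :
    rVal G v (K.evenSh v j) S = rVal G v K S + j :=
  rVal_shift_general G v S K j

end
end

section
/- The map A : C⁺(G₊₁(v)) → C⁺(G), A(φ)((K,t),S) = ∑_{i∈ℤ} U^{c(i,(K,t),S)}·φ((K,t+2i+1),S), is injective. -/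
/-!
Common setup: the lattice cohomology complex of a weighted graph
(Némethi; J. Greene, "A surgery triangle for lattice cohomology").

A finite graph `G` with integer weights on vertices and signs on (multi-)edges is
encoded by its symmetric incidence data `M : V → V → ℤ`: for `u ≠ w` the entry
`M u w` is the signed number of edges joining `u` and `w`, and `M u u = m(u)` is
the weight of `u`.  This is exactly the data of the intersection pairing `(·,·)`
on `L(G) = ℤ⟨E_u : u ∈ V⟩`, via `M u w = (E_u, E_w)`.
-/

noncomputable section

open Function

variable {V : Type*} [Fintype V] [DecidableEq V]

/-!
Fix `(K, t) ∈ Char(G)` and `S`, and put `a i = φ((K, t + 2i + 1), S)` and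
`Q j = q((K, t + 2j), S) - q(K, t + 2j)`. Since
`q'((K, t + 2i + 1), S) - q'(K, t + 2i + 1) = Q (i + 1)`, the equations `A φ = 0` along this
line read `∑ᵢ U^{Q j - Q (j + i + 1) + i(i+1)/2} a (j + i) = 0` for every `j`.
Being a maximum of the functions `j ↦ c_T - j·[v ∈ T]`, `Q` is convex, nonincreasing and drops
by at most one per step. Hence all exponents are `≥ 0`, and they vanish only for `i = -1`,
for `i = 0` when `Q` is flat at `j`, and for `i = -2` when `Q` drops at `j - 1`.
Comparing coefficients of `U^{-d}`, for `d` the largest degree occurring in `a`, leaves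
three-term relations among the `b m = [U^{-d}] a m`. If `Q` is flat from just above the least
point `s` of the support of `b` on, the relation at `t + 1` (with `t` the largest point)
isolates `b t`; otherwise the relation at `s + 1` isolates `b s`.
-/

namespace Tplus

def coeff (n : ℕ) : Tplus →+ ZMod 2 := Finsupp.applyAddHom n

theorem ext {f g : Tplus} (h : ∀ n, coeff n f = coeff n g) : f = g := Finsupp.ext h

theorem finite_setOf_coeff_ne_zero (f : Tplus) : {n | coeff n f ≠ 0}.Finite :=
  Finsupp.hasFiniteSupport (f : ℕ →₀ ZMod 2)

end Tplus

theorem coeff_Upow (e : ℤ) (f : Tplus) (n : ℕ) :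
    Tplus.coeff n (Upow e f)
      = if 0 ≤ (n : ℤ) + e then Tplus.coeff ((n : ℤ) + e).toNat f else 0 := by
  show Finsupp.embDomain ⟨Nat.cast, Nat.cast_injective⟩ (f : ℕ →₀ ZMod 2) (n + e) = _
  split_ifs with h
  · conv_lhs => rw [← Int.toNat_of_nonneg h]
    exact Finsupp.embDomain_apply_self _ _ _
  · refine Finsupp.embDomain_of_notMem_range _ _ _ ?_
    rintro ⟨k, hk⟩
    simp only [Function.Embedding.coeFn_mk] at hk
    omega

theorem Upow_sub (e : ℤ) (f g : Tplus) : Upow e (f - g) = Upow e f - Upow e g :=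
  Tplus.ext fun n => by
    simp only [map_sub, coeff_Upow]
    split_ifs <;> simp

theorem support_Upow_subset {α : Type*} (e : α → ℤ) (g : α → Tplus) :
    support (fun x => Upow (e x) (g x)) ⊆ support g :=
  fun x hx h0 => hx (by simp only [h0, Upow_zero])

theorem coeff_Upow_of_coeff_eq_zero_above {e : ℤ} (he : 0 ≤ e) {f : Tplus} {d : ℕ}
    (hf : ∀ n, d < n → Tplus.coeff n f = 0) :
    Tplus.coeff d (Upow e f) = if e = 0 then Tplus.coeff d f else 0 := by
  rw [coeff_Upow, if_pos (by omega)]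
  split_ifs with h
  · simp [h]
  · exact hf _ (by omega)

structure IsConvexDescent (Q : ℤ → ℤ) : Prop where
  succ_le : ∀ j, Q (j + 1) ≤ Q j
  le_succ_add_one : ∀ j, Q j ≤ Q (j + 1) + 1
  convex : ∀ j, 2 * Q (j + 1) ≤ Q j + Q (j + 2)

def cExpOf (Q : ℤ → ℤ) (j i : ℤ) : ℤ := Q j - Q (j + i + 1) + i * (i + 1) / 2

theorem cExpOf_neg_one (Q : ℤ → ℤ) (j : ℤ) : cExpOf Q j (-1) = 0 := by
  simp [cExpOf]

theorem cExpOf_zero (Q : ℤ → ℤ) (j : ℤ) : cExpOf Q j 0 = Q j - Q (j + 1) := by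
  simp [cExpOf]

theorem cExpOf_neg_two (Q : ℤ → ℤ) (j : ℤ) : cExpOf Q j (-2) = Q j - Q (j - 1) + 1 := by
  norm_num [cExpOf, sub_eq_add_neg, add_assoc]

theorem Finset.isConvexDescent_sup'_sub_mul {ι : Type*} {s : Finset ι} (hs : s.Nonempty)
    (c w : ι → ℤ) (hw : ∀ t ∈ s, 0 ≤ w t ∧ w t ≤ 1) :
    IsConvexDescent fun j => s.sup' hs fun t => c t - j * w t where
  succ_le j := Finset.sup'_mono_fun fun t ht => by nlinarith [hw t ht]
  le_succ_add_one j := Finset.sup'_le _ _ fun t ht => by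
    have := Finset.le_sup' (fun t => c t - (j + 1) * w t) ht
    nlinarith [hw t ht]
  convex j := by
    obtain ⟨t, ht, hmax⟩ := Finset.exists_mem_eq_sup' hs fun t => c t - (j + 1) * w t
    have h0 := Finset.le_sup' (fun t => c t - j * w t) ht
    have h2 := Finset.le_sup' (fun t => c t - (j + 2) * w t) ht
    rw [hmax]
    nlinarith

namespace IsConvexDescent

variable {Q : ℤ → ℤ} (hQ : IsConvexDescent Q)
include hQ

theorem antitone : Antitone Q :=
  antitone_int_of_succ_le hQ.succ_le

theorem le_add_sub {j k : ℤ} (hjk : j ≤ k) : Q j ≤ Q k + (k - j) := by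
  have : Monotone fun j => Q j + j :=
    monotone_int_of_le_succ fun j => by have := hQ.le_succ_add_one j; omega
  have : Q j + j ≤ Q k + k := this hjk
  omega

theorem eq_succ_of_le {k l : ℤ} (hk : Q k = Q (k + 1)) (hkl : k ≤ l) : Q l = Q (l + 1) := by
  have hdrop : Antitone fun j => Q j - Q (j + 1) :=
    antitone_int_of_succ_le fun j => by
      have := hQ.convex j
      rw [show j + 1 + 1 = j + 2 by ring]
      omega
  have : Q l - Q (l + 1) ≤ Q k - Q (k + 1) := hdrop hkl
  have := hQ.succ_le l
  omega

theorem cExpOf_nonneg (j i : ℤ) : 0 ≤ cExpOf Q j i := by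
  rcases lt_trichotomy i (-1) with hi | rfl | hi
  · have htri := Int.two_mul_ediv_two_of_even (Int.even_mul_succ_self i)
    have := hQ.le_add_sub (show j + i + 1 ≤ j by omega)
    unfold cExpOf
    nlinarith
  · exact (cExpOf_neg_one Q j).ge
  · have htri := Int.two_mul_ediv_two_of_even (Int.even_mul_succ_self i)
    have := hQ.antitone (show j ≤ j + i + 1 by omega)
    unfold cExpOf
    nlinarith

theorem cExpOf_pos {i : ℤ} (hi : 1 ≤ i ∨ i ≤ -3) (j : ℤ) : 0 < cExpOf Q j i := by
  have htri := Int.two_mul_ediv_two_of_even (Int.even_mul_succ_self i)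
  unfold cExpOf
  rcases hi with hi | hi
  · have := hQ.antitone (show j ≤ j + i + 1 by omega)
    nlinarith
  · have := hQ.le_add_sub (show j + i + 1 ≤ j by omega)
    nlinarith

theorem eq_zero_of_relations {R : Type*} [AddCommMonoid R] {b : ℤ → R}
    (hb : (support b).Finite)
    (hrel : ∀ j, ∑ᶠ i, (if cExpOf Q j i = 0 then b (j + i) else 0) = 0) : b = 0 := by
  by_contra hne
  have hsupp : hb.toFinset.Nonempty := by
    obtain ⟨m, hm⟩ := Function.ne_iff.mp hne
    exact ⟨m, by simpa using hm⟩
  set s := hb.toFinset.min' hsupp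
  set t := hb.toFinset.max' hsupp
  have hbs : b s ≠ 0 := by simpa using hb.toFinset.min'_mem hsupp
  have hbt : b t ≠ 0 := by simpa using hb.toFinset.max'_mem hsupp
  have hst : s ≤ t := hb.toFinset.min'_le_max' hsupp
  have below : ∀ m < s, b m = 0 := fun m hm => by
    by_contra h
    exact absurd (hb.toFinset.min'_le m (by simpa using h)) (not_le.mpr hm)
  have above : ∀ m, t < m → b m = 0 := fun m hm => by
    by_contra h
    exact absurd (hb.toFinset.le_max' m (by simpa using h)) (not_le.mpr hm)
  have isolate :
      ∀ k, (∀ i ≠ -1, cExpOf Q (k + 1) i = 0 → b (k + 1 + i) = 0) → b k = 0 := by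
    intro k hk
    have := hrel (k + 1)
    rwa [finsum_eq_single _ (-1) fun i hi => by split_ifs with h; exacts [hk i hi h, rfl],
      if_pos (cExpOf_neg_one Q _), show k + 1 + -1 = k by ring] at this
  by_cases hflat : Q (s + 1) = Q (s + 1 + 1)
  · refine hbt (isolate t fun i hi he => ?_)
    rcases lt_trichotomy i (-2) with hi' | rfl | hi'
    · exact absurd he (hQ.cExpOf_pos (by omega) _).ne'
    · rcases hst.eq_or_lt with hts | hts
      · exact below _ (by omega)
      · have := hQ.eq_succ_of_le hflat (show s + 1 ≤ t by omega)
        rw [cExpOf_neg_two, show t + 1 - 1 = t by ring] at he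
        omega
    · exact above _ (by omega)
  · refine hbs (isolate s fun i hi he => ?_)
    rcases lt_trichotomy i 0 with hi' | rfl | hi'
    · exact below _ (by omega)
    · exact absurd (cExpOf_zero Q _ ▸ he) (sub_ne_zero.mpr hflat)
    · exact absurd he (hQ.cExpOf_pos (by omega) _).ne'

theorem coeff_eq_zero_of_Upow_relations {a : ℤ → Tplus} (ha : (support a).Finite)
    (hrel : ∀ j, ∑ᶠ i, Upow (cExpOf Q j i) (a (j + i)) = 0) {d : ℕ}
    (hd : ∀ m n, d < n → Tplus.coeff n (a m) = 0) (m : ℤ) : Tplus.coeff d (a m) = 0 := by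
  refine congrFun (hQ.eq_zero_of_relations (b := fun m => Tplus.coeff d (a m))
    (ha.subset (support_comp_subset (map_zero _) a)) fun j => ?_) m
  have hfin : (support fun i => Upow (cExpOf Q j i) (a (j + i))).Finite :=
    (ha.preimage (add_right_injective j).injOn).subset (support_Upow_subset _ _)
  calc ∑ᶠ i, (if cExpOf Q j i = 0 then Tplus.coeff d (a (j + i)) else 0)
      = ∑ᶠ i, Tplus.coeff d (Upow (cExpOf Q j i) (a (j + i))) :=
        finsum_congr fun i =>
          (coeff_Upow_of_coeff_eq_zero_above (hQ.cExpOf_nonneg j i) (hd _)).symm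
    _ = Tplus.coeff d (∑ᶠ i, Upow (cExpOf Q j i) (a (j + i))) := (map_finsum _ hfin).symm
    _ = 0 := by rw [hrel j, map_zero]

theorem eq_zero_of_Upow_relations {a : ℤ → Tplus} (ha : (support a).Finite)
    (hrel : ∀ j, ∑ᶠ i, Upow (cExpOf Q j i) (a (j + i)) = 0) : a = 0 := by
  by_contra hne
  set D : Set ℕ := {n | ∃ m, Tplus.coeff n (a m) ≠ 0}
  have hD : D.Finite :=
    (ha.biUnion fun m _ => (a m).finite_setOf_coeff_ne_zero).subset fun n ⟨m, hm⟩ =>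
      Set.mem_biUnion (x := m) (fun h0 => hm (by rw [h0, map_zero])) hm
  have hDne : D.Nonempty := by
    obtain ⟨m, hm⟩ := Function.ne_iff.mp hne
    by_contra hD
    exact hm (Tplus.ext fun n => by
      by_contra h
      exact hD ⟨n, m, by rwa [Pi.zero_apply, map_zero] at h⟩)
  obtain ⟨d, ⟨m, hm⟩, hdmax⟩ := Set.exists_max_image D id hD hDne
  refine hm (hQ.coeff_eq_zero_of_Upow_relations ha hrel (fun m' n hn => ?_) m)
  by_contra h
  exact absurd (hdmax n ⟨m', h⟩) (not_le.mpr hn)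

end IsConvexDescent


namespace WGraph

theorem qdiff_update_two_mul (G : WGraph V) (K x : V → ℤ) (v : V) (j : ℤ) :
    G.qdiff (update K v (K v + 2 * j)) x = G.qdiff K x - j * x v := by
  unfold qdiff
  rw [evalK_update, show -(evalK K x + 2 * j * x v + G.pair x x)
      = -(evalK K x + G.pair x x) + -(j * x v) * 2 by ring,
    Int.add_mul_ediv_right _ _ two_ne_zero]
  ring

theorem qdiff_bump_update (G : WGraph V) (L : V → ℤ) (v : V) (c : ℤ) (T : Finset V) :
    (G.bump v).qdiff (update L v (L v + c)) (eVec T)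
      = G.qdiff (update L v (L v + (c + 1))) (eVec T) := by
  have hsq : eVec T v * eVec T v = eVec T v := by
    unfold eVec
    split_ifs <;> norm_num
  unfold qdiff
  rw [evalK_update, evalK_update, pair_bump, hsq]
  ring_nf

theorem IsChar.unbump {G : WGraph V} {v : V} {L : V → ℤ} (h : (G.bump v).IsChar L) :
    G.IsChar (update L v (L v + -1)) := by
  intro y
  have hy := h y
  obtain ⟨k, hk⟩ := Int.even_mul_succ_self (y v - 1)
  have hsq : y v * y v = y v + (k + k) := by linear_combination hk
  rw [pair_bump, hsq] at hy
  rw [evalK_update]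
  simp only [Int.ModEq] at hy ⊢
  omega

variable {G : WGraph V}

theorem Ch.evenSh_bumpSh (K : G.Ch) (v : V) (j i : ℤ) :
    (K.evenSh v j).bumpSh v i = K.bumpSh v (j + i) := by
  apply Subtype.ext
  show update (update K.1 v (K.1 v + 2 * j)) v (update K.1 v (K.1 v + 2 * j) v + (2 * i + 1))
    = update K.1 v (K.1 v + (2 * (j + i) + 1))
  rw [update_self, update_idem]
  congr 1
  ring

theorem Ch.bumpSh_injective (K : G.Ch) (v : V) : Injective fun i : ℤ => K.bumpSh v i := by
  intro i i' h
  have h' := congrFun (congrArg Subtype.val h) v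
  simp only [Ch.bumpSh, update_self] at h'
  omega

theorem Ch.exists_bumpSh_zero_eq (v : V) (K' : (G.bump v).Ch) : ∃ K : G.Ch, K.bumpSh v 0 = K' :=
  ⟨⟨_, K'.2.unbump⟩, Subtype.ext <| by simp [Ch.bumpSh]⟩

theorem qrel_evenSh (K : G.Ch) (v : V) (S : Finset V) (j : ℤ) :
    G.qrel (K.evenSh v j).1 S
      = S.powerset.sup' S.powerset_nonempty fun T => G.qdiff K.1 (eVec T) - j * eVec T v :=
  Finset.sup'_congr _ rfl fun T _ => G.qdiff_update_two_mul K.1 (eVec T) v j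

theorem isConvexDescent_qrel_evenSh (K : G.Ch) (v : V) (S : Finset V) :
    IsConvexDescent fun j => G.qrel (K.evenSh v j).1 S := by
  simp only [qrel_evenSh]
  refine Finset.isConvexDescent_sup'_sub_mul _ _ _ fun T _ => ?_
  unfold eVec
  split_ifs <;> norm_num

theorem qrel_bump_bumpSh (K : G.Ch) (v : V) (m : ℤ) (S : Finset V) :
    (G.bump v).qrel (K.bumpSh v m).1 S = G.qrel (K.evenSh v (m + 1)).1 S :=
  Finset.sup'_congr _ rfl fun T _ => by
    rw [Ch.bumpSh, Ch.evenSh, qdiff_bump_update, show 2 * m + 1 + 1 = 2 * (m + 1) by ring]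

end WGraph

theorem cExp_evenSh (G : WGraph V) (v : V) (K : G.Ch) (S : Finset V) (j i : ℤ) :
    cExp G v i (K.evenSh v j) S = cExpOf (fun j => G.qrel (K.evenSh v j).1 S) j i := by
  unfold cExp cExpOf
  rw [WGraph.Ch.evenSh_bumpSh, WGraph.qrel_bump_bumpSh]

theorem finite_support_bumpSh {G : WGraph V} {v : V} (φ : Cplus (G.bump v)) (K : G.Ch)
    (S : Finset V) : (support fun m => φ (K.bumpSh v m, S)).Finite :=
  φ.hasFiniteSupport.preimage fun _ _ _ _ h => K.bumpSh_injective v (congrArg Prod.fst h)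

theorem eq_zero_of_forall_finsum_cExp_eq_zero {G : WGraph V} {v : V} {φ : Cplus (G.bump v)}
    (h : ∀ K S, ∑ᶠ i : ℤ, Upow (cExp G v i K S) (φ (K.bumpSh v i, S)) = 0) : φ = 0 := by
  ext ⟨K', S⟩
  obtain ⟨K, rfl⟩ := WGraph.Ch.exists_bumpSh_zero_eq v K'
  have hline := (WGraph.isConvexDescent_qrel_evenSh K v S).eq_zero_of_Upow_relations
    (finite_support_bumpSh φ K S) fun j => by
      simpa only [cExp_evenSh, WGraph.Ch.evenSh_bumpSh] using h (K.evenSh v j) S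
  exact congrFun hline 0

/-- The map `A : C⁺(G₊₁(v)) → C⁺(G)`,
`A(φ)((K,t),S) = ∑_{i∈ℤ} U^{c(i,(K,t),S)}·φ((K,t+2i+1),S)`, is injective. -/
theorem A_injective (G : WGraph V) (v : V)
    (A : Cplus (G.bump v) → Cplus G) (hA : IsA G v A) :
    Function.Injective A := by
  intro φ₁ φ₂ h
  rw [← sub_eq_zero]
  refine eq_zero_of_forall_finsum_cExp_eq_zero fun K S => ?_
  have hfin (φ : Cplus (G.bump v)) :
      (support fun i => Upow (cExp G v i K S) (φ (K.bumpSh v i, S))).Finite :=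
    (finite_support_bumpSh φ K S).subset (support_Upow_subset _ _)
  simp only [Finsupp.sub_apply, Upow_sub]
  rw [finsum_sub_distrib (hfin φ₁) (hfin φ₂), ← hA, ← hA, h, sub_self]

end
end

section
/- Suppose v ∈ S and (K,t) is a characteristic vector of G with r((K,t),S) = 0. Then for every i ∈ ℤ: A(((K,t+2i+1),S)^∨) = ((K,t+2i),S)^∨ + ((K,t+2i+2),S)^∨ if i ≥ 0; A(((K,t+2i+1),S)^∨) = ((K,t),S)^∨ if i = −1; and A(((K,t+2i+1),S)^∨) = ((K,t+2i+2),S)^∨ + ((K,t+2i+4),S)^∨ if i ≤ −2. -/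
/-!
Common setup: the lattice cohomology complex of a weighted graph
(Némethi; J. Greene, "A surgery triangle for lattice cohomology").

A finite graph `G` with integer weights on vertices and signs on (multi-)edges is
encoded by its symmetric incidence data `M : V → V → ℤ`: for `u ≠ w` the entry
`M u w` is the signed number of edges joining `u` and `w`, and `M u u = m(u)` is
the weight of `u`.  This is exactly the data of the intersection pairing `(·,·)`
on `L(G) = ℤ⟨E_u : u ∈ V⟩`, via `M u w = (E_u, E_w)`.
-/

noncomputable section

open Function

variable {V : Type*} [Fintype V] [DecidableEq V]

/-!
Split the maximum defining `q(·,S)` according to whether `T ∋ v`.  For `(K,t+2k)` in `G`,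
and for `(K,t+2i+1)` in `G₊₁(v)`, the part with `T ∌ v` is `a = q((K,t),S−v) − q(K,t)`, and
the part with `T ∋ v` is `q((K,t)+2E_v,S−v) − q(K,t)` lowered by `k`, resp. by `i+1`.  The
hypothesis `r = 0` makes that part equal to `a` as well.  Hence
`c(i−k,(K,t+2k),S) = max(0,−k) − max(0,−i−1) + (i−k)(i−k+1)/2`, which is never negative.
The only `((K,t+2k),S)^∨` appearing in `A(((K,t+2i+1),S)^∨)` are those where this
exponent vanishes.
-/

namespace WGraph

open Matrix

variable (G : WGraph V)

def mat : Matrix V V ℤ := Matrix.of G.M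

omit [DecidableEq V] in
theorem evalK_eq_dotProduct (K x : V → ℤ) : evalK K x = K ⬝ᵥ x := rfl

omit [DecidableEq V] in
theorem pair_eq_dotProduct (x y : V → ℤ) : G.pair x y = x ⬝ᵥ (G.mat *ᵥ y) := by
  simp only [pair, dotProduct, mulVec, mat, of_apply, Finset.mul_sum]
  exact Finset.sum_congr rfl fun u _ => Finset.sum_congr rfl fun w _ => by ring

omit [DecidableEq V] in
theorem pair_comm (x y : V → ℤ) : G.pair x y = G.pair y x := by
  unfold pair
  rw [Finset.sum_comm]
  exact Finset.sum_congr rfl fun u _ => Finset.sum_congr rfl fun w _ => by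
    rw [G.symm w u]; ring

omit [DecidableEq V] in
theorem pair_add_self (x y : V → ℤ) :
    G.pair (x + y) (x + y) = G.pair x x + 2 * G.pair x y + G.pair y y := by
  have hyx := G.pair_comm y x
  simp only [pair_eq_dotProduct, mulVec_add, dotProduct_add, add_dotProduct] at hyx ⊢
  rw [hyx]
  ring

omit [Fintype V] in
theorem eVec_singleton (u : V) : eVec {u} = Pi.single u 1 := by
  funext w
  by_cases h : w = u <;> simp [eVec, h]

omit [Fintype V] in
theorem eVec_insert {v : V} {T : Finset V} (hvT : v ∉ T) :
    eVec (insert v T) = eVec {v} + eVec T := by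
  funext u
  by_cases h : u = v
  · subst h; simp [eVec, hvT]
  · simp [eVec, h]

theorem chAdd_eq (K x : V → ℤ) : G.chAdd K x = K + (2 : ℤ) • (x ᵥ* G.mat) := by
  funext u
  rw [chAdd, pair_eq_dotProduct, eVec_singleton, mulVec_single_one, Pi.add_apply,
    Pi.smul_apply, smul_eq_mul]
  rfl

theorem evalK_chAdd (K x y : V → ℤ) :
    evalK (G.chAdd K x) y = evalK K y + 2 * G.pair x y := by
  rw [chAdd_eq, evalK_eq_dotProduct, evalK_eq_dotProduct, pair_eq_dotProduct,
    dotProduct_mulVec, add_dotProduct, smul_dotProduct, smul_eq_mul]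

variable {G}

theorem qdiff_insert {K : V → ℤ} (hK : G.IsChar K) {v : V} {T : Finset V} (hvT : v ∉ T) :
    G.qdiff K (eVec (insert v T))
      = G.qdiff K (eVec {v}) + G.qdiff (G.chAdd K (eVec {v})) (eVec T) := by
  have hv_even := (hK (eVec {v})).dvd
  have hK_add : evalK K (eVec (insert v T)) = evalK K (eVec {v}) + evalK K (eVec T) := by
    rw [eVec_insert hvT, evalK_eq_dotProduct, dotProduct_add]; rfl
  have hpair := G.pair_add_self (eVec {v}) (eVec T)
  have hchAdd := G.evalK_chAdd K (eVec {v}) (eVec T)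
  rw [← eVec_insert hvT] at hpair
  unfold qdiff
  omega

theorem qdiff_update_even (K : V → ℤ) (v : V) (k : ℤ) (T : Finset V) :
    G.qdiff (Function.update K v (K v + 2 * k)) (eVec T)
      = G.qdiff K (eVec T) - if v ∈ T then k else 0 := by
  unfold qdiff
  rw [evalK_update]
  split_ifs with h <;> simp only [eVec, h, if_true, if_false] <;> omega

theorem qdiff_bump_update_s18 (K : V → ℤ) (v : V) (i : ℤ) (T : Finset V) :
    (G.bump v).qdiff (Function.update K v (K v + (2 * i + 1))) (eVec T)
      = G.qdiff K (eVec T) - if v ∈ T then i + 1 else 0 := by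
  unfold qdiff
  rw [evalK_update, pair_bump]
  split_ifs with h <;> simp only [eVec, h, if_true, if_false] <;> omega

end WGraph

theorem Finset.sup'_powerset_insert_sub_ite {α β : Type*} [DecidableEq α] [AddCommGroup β]
    [LinearOrder β] [IsOrderedAddMonoid β] {s : Finset α} {a : α} (ha : a ∉ s)
    (F : Finset α → β) (c : β) :
    (insert a s).powerset.sup' (powerset_nonempty _) (fun T => F T - if a ∈ T then c else 0)
      = max (s.powerset.sup' (powerset_nonempty _) F)
          (s.powerset.sup' (powerset_nonempty _) (fun T => F (insert a T)) - c) := by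
  have hnot : ∀ T ∈ s.powerset, a ∉ T := fun T hT haT => ha (mem_powerset.mp hT haT)
  simp only [powerset_insert]
  rw [sup'_union (powerset_nonempty _) ((powerset_nonempty _).image _), sup'_image,
    apply_sup'_eq_sup'_comp (powerset_nonempty _) (· - c) fun x y =>
      (max_sub_sub_right x y c).symm]
  congr 1
  · exact sup'_congr _ rfl fun T hT => by simp [hnot T hT]
  · exact sup'_congr _ rfl fun T hT => by simp

namespace WGraph

variable {G : WGraph V} {v : V} {S : Finset V}

theorem qrel_eq_max_of_qdiff_eq {G' : WGraph V} {K' K : V → ℤ} (hK : G.IsChar K) (hv : v ∈ S)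
    (c : ℤ) (h : ∀ T, G'.qdiff K' (eVec T) = G.qdiff K (eVec T) - if v ∈ T then c else 0) :
    G'.qrel K' S = max (G.qrel K (S.erase v))
      (G.qdiff K (eVec {v}) + G.qrel (G.chAdd K (eVec {v})) (S.erase v) - c) := by
  have hvS : v ∉ S.erase v := Finset.notMem_erase v S
  have hsplit : ∀ T ∈ (S.erase v).powerset, G.qdiff K (eVec (insert v T))
      = G.qdiff K (eVec {v}) + G.qdiff (G.chAdd K (eVec {v})) (eVec T) := fun T hT =>
    qdiff_insert hK fun hvT => hvS (Finset.mem_powerset.mp hT hvT)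
  conv_lhs => rw [← Finset.insert_erase hv]
  unfold qrel
  simp only [h]
  rw [Finset.sup'_powerset_insert_sub_ite hvS, Finset.sup'_congr _ rfl hsplit,
    ← Finset.add_sup']

theorem Ch.evenSh_zero (K : G.Ch) (v : V) : K.evenSh v 0 = K :=
  Subtype.ext <| by simp [Ch.evenSh]

theorem Ch.evenSh_injective (K : G.Ch) (v : V) : Function.Injective (K.evenSh v) := by
  intro k k' h
  have hv := congrFun (congrArg Subtype.val h) v
  simp only [Ch.evenSh, Function.update_self] at hv
  omega

theorem Ch.bumpSh_evenSh (K : G.Ch) (v : V) (i k : ℤ) :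
    (K.evenSh v k).bumpSh v (i - k) = K.bumpSh v i := by
  refine Subtype.ext ?_
  simp only [Ch.bumpSh, Ch.evenSh, Function.update_self, Function.update_idem]
  congr 1
  ring

theorem Ch.eq_evenSh_of_bumpSh_eq {K K' : G.Ch} {v : V} {i j : ℤ}
    (h : K'.bumpSh v j = K.bumpSh v i) : K' = K.evenSh v (i - j) := by
  refine Subtype.ext (funext fun u => ?_)
  have hu := congrFun (congrArg Subtype.val h) u
  simp only [Ch.bumpSh, Ch.evenSh, Function.update_apply] at hu ⊢
  split_ifs at hu ⊢ with huv
  · subst huv; omega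
  · exact hu

theorem qrel_erase_eq_of_rVal_eq_zero {K : G.Ch} (hr : rVal G v K S = 0) :
    G.qdiff K.1 (eVec {v}) + G.qrel (G.chAdd K.1 (eVec {v})) (S.erase v)
      = G.qrel K.1 (S.erase v) := by
  unfold rVal at hr
  omega

theorem qrel_evenSh_s18 {K : G.Ch} (hv : v ∈ S) (hr : rVal G v K S = 0) (k : ℤ) :
    G.qrel (K.evenSh v k).1 S
      = max (G.qrel K.1 (S.erase v)) (G.qrel K.1 (S.erase v) - k) :=
  (qrel_eq_max_of_qdiff_eq K.2 hv k (qdiff_update_even K.1 v k)).trans <| by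
    rw [qrel_erase_eq_of_rVal_eq_zero hr]

theorem qrel_bumpSh {K : G.Ch} (hv : v ∈ S) (hr : rVal G v K S = 0) (i : ℤ) :
    (G.bump v).qrel (K.bumpSh v i).1 S
      = max (G.qrel K.1 (S.erase v)) (G.qrel K.1 (S.erase v) - (i + 1)) :=
  (qrel_eq_max_of_qdiff_eq K.2 hv (i + 1) (qdiff_bump_update_s18 K.1 v i)).trans <| by
    rw [qrel_erase_eq_of_rVal_eq_zero hr]

theorem cExp_evenSh {K : G.Ch} (hv : v ∈ S) (hr : rVal G v K S = 0) (i k : ℤ) :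
    cExp G v (i - k) (K.evenSh v k) S
      = max 0 (-k) - max 0 (-(i + 1)) + (i - k) * (i - k + 1) / 2 := by
  have hk := qrel_evenSh_s18 hv hr k
  have hi := qrel_bumpSh hv hr i
  rw [cExp, Ch.bumpSh_evenSh]
  omega

end WGraph

theorem Upow_Um {e : ℤ} {m d : ℕ} (h : (d : ℤ) + e = m) : Upow e (Um m) = Um d := by
  refine Finsupp.ext fun d' => ?_
  simp only [Upow, Um, Finsupp.embDomain_single, Finsupp.comapDomain_apply,
    Finsupp.single_apply, Function.Embedding.coeFn_mk]
  exact if_congr (by omega) rfl rfl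

theorem Upow_Um_of_lt {e : ℤ} {m : ℕ} (h : (m : ℤ) < e) : Upow e (Um m) = 0 := by
  refine Finsupp.ext fun d' => ?_
  simp only [Upow, Um, Finsupp.embDomain_single, Finsupp.comapDomain_apply,
    Finsupp.single_apply, Function.Embedding.coeFn_mk]
  exact if_neg (by omega)

theorem Upow_Um_zero {e : ℤ} (he : 0 ≤ e) : Upow e (Um 0) = if e = 0 then Um 0 else 0 := by
  split_ifs with h
  · exact Upow_Um (by simp [h])
  · exact Upow_Um_of_lt (by omega)

theorem max_le_mul_succ_div_two (m : ℤ) : max m (-m - 1) ≤ m * (m + 1) / 2 := by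
  have h₁ : 2 * m ≤ m * (m + 1) := by
    rcases le_or_gt m 0 with h | h <;> nlinarith
  have h₂ : -2 * m - 2 ≤ m * (m + 1) := by
    rcases le_or_gt m (-2) with h | h <;> nlinarith
  omega

/-- The shifts `k` with `c(i − k, (K, t + 2k), S) = 0` when `v ∈ S` and `r((K,t),S) = 0`. -/
def vanishingShifts (i : ℤ) : Finset ℤ :=
  if 0 ≤ i then {i, i + 1} else if i = -1 then {0} else {i + 1, i + 2}

theorem shiftExponent_nonneg_and_eq_zero_iff (i k : ℤ) :
    0 ≤ max 0 (-k) - max 0 (-(i + 1)) + (i - k) * (i - k + 1) / 2 ∧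
      (max 0 (-k) - max 0 (-(i + 1)) + (i - k) * (i - k + 1) / 2 = 0 ↔
        k ∈ vanishingShifts i) := by
  have h₀ := max_le_mul_succ_div_two (i - k)
  have h₁ := max_le_mul_succ_div_two (i - k + 1)
  have hsucc : (i - k + 1) * (i - k + 1 + 1) / 2 = (i - k) * (i - k + 1) / 2 + (i - k + 1) := by
    rw [show (i - k + 1) * (i - k + 1 + 1) = (i - k) * (i - k + 1) + (i - k + 1) * 2 by ring,
      Int.add_mul_ediv_right _ _ two_ne_zero]
  have hz₀ : i - k = 0 ∨ i - k = -1 → (i - k) * (i - k + 1) / 2 = 0 := by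
    rintro (h | h) <;> simp [h]
  have hz₁ : i - k + 1 = 0 ∨ i - k + 1 = -1 → (i - k + 1) * (i - k + 1 + 1) / 2 = 0 := by
    rintro (h | h) <;> simp [h]
  generalize (i - k) * (i - k + 1) / 2 = a at *
  generalize (i - k + 1) * (i - k + 1 + 1) / 2 = b at *
  unfold vanishingShifts
  split_ifs <;> simp only [Finset.mem_insert, Finset.mem_singleton]
  all_goals omega

section dual

variable {G : WGraph V} {v : V} {A : Cplus (G.bump v) → Cplus G}

theorem IsA.apply_dual_bumpSh_evenSh (hA : IsA G v A) (K : G.Ch) (S : Finset V) (i k : ℤ) :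
    A (dual (K.bumpSh v i, S) 0) (K.evenSh v k, S)
      = Upow (cExp G v (i - k) (K.evenSh v k) S) (Um 0) := by
  rw [hA, finsum_eq_single _ (i - k), WGraph.Ch.bumpSh_evenSh, dual, Finsupp.single_eq_same]
  intro j hj
  rw [dual, Finsupp.single_eq_of_ne, Upow_zero]
  intro h
  have hk := K.evenSh_injective v (WGraph.Ch.eq_evenSh_of_bumpSh_eq (congrArg Prod.fst h))
  omega

theorem IsA.apply_dual_bumpSh_of_ne (hA : IsA G v A) (K : G.Ch) (S : Finset V) (i : ℤ)
    {p : G.Ch × Finset V} (hp : ∀ k, p ≠ (K.evenSh v k, S)) :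
    A (dual (K.bumpSh v i, S) 0) p = 0 := by
  obtain ⟨K', S'⟩ := p
  rw [hA]
  refine finsum_eq_zero_of_forall_eq_zero fun j => ?_
  rw [dual, Finsupp.single_eq_of_ne, Upow_zero]
  intro h
  obtain ⟨hK, hS⟩ := Prod.mk.inj h
  exact hp (i - j) (by rw [WGraph.Ch.eq_evenSh_of_bumpSh_eq hK, hS])

theorem IsA.dual_bumpSh_eq_sum (hA : IsA G v A) (K : G.Ch) (S : Finset V) (i : ℤ)
    (roots : Finset ℤ) (hroots : ∀ k, 0 ≤ cExp G v (i - k) (K.evenSh v k) S ∧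
      (cExp G v (i - k) (K.evenSh v k) S = 0 ↔ k ∈ roots)) :
    A (dual (K.bumpSh v i, S) 0) = ∑ k ∈ roots, dual (K.evenSh v k, S) 0 := by
  classical
  refine Finsupp.ext fun p => ?_
  rw [Finsupp.finsetSum_apply]
  by_cases hp : ∃ k, p = (K.evenSh v k, S)
  · obtain ⟨k, rfl⟩ := hp
    have hdual : ∀ k',
        dual (K.evenSh v k', S) 0 (K.evenSh v k, S) = if k' = k then Um 0 else 0 := fun k' => by
        rw [dual, Finsupp.single_apply]
        simp only [Prod.mk.injEq, and_true, (K.evenSh_injective v).eq_iff]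
    rw [hA.apply_dual_bumpSh_evenSh, Upow_Um_zero (hroots k).1,
      Finset.sum_congr rfl fun k' _ => hdual k', Finset.sum_ite_eq']
    exact if_congr (hroots k).2 rfl rfl
  · simp only [not_exists] at hp
    rw [hA.apply_dual_bumpSh_of_ne K S i hp]
    exact (Finset.sum_eq_zero fun k _ => Finsupp.single_eq_of_ne (hp k)).symm

end dual

/-- Suppose `v ∈ S` and `(K,t)` is a characteristic vector of `G` with
`r((K,t),S) = 0`.  Then for every `i ∈ ℤ`:
`A(((K,t+2i+1),S)^∨) = ((K,t+2i),S)^∨ + ((K,t+2i+2),S)^∨` if `i ≥ 0`;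
`A(((K,t+2i+1),S)^∨) = ((K,t),S)^∨` if `i = −1`; and
`A(((K,t+2i+1),S)^∨) = ((K,t+2i+2),S)^∨ + ((K,t+2i+4),S)^∨` if `i ≤ −2`. -/
theorem A_dual_of_mem (G : WGraph V) (v : V)
    (A : Cplus (G.bump v) → Cplus G) (hA : IsA G v A)
    (K : G.Ch) (S : Finset V) (hv : v ∈ S) (hr : rVal G v K S = 0) (i : ℤ) :
    (0 ≤ i → A (dual (K.bumpSh v i, S) 0)
        = dual (K.evenSh v i, S) 0 + dual (K.evenSh v (i + 1), S) 0) ∧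
    (i = -1 → A (dual (K.bumpSh v i, S) 0) = dual (K, S) 0) ∧
    (i ≤ -2 → A (dual (K.bumpSh v i, S) 0)
        = dual (K.evenSh v (i + 1), S) 0 + dual (K.evenSh v (i + 2), S) 0) := by
  have hsum := hA.dual_bumpSh_eq_sum K S i (vanishingShifts i) fun k => by
    rw [WGraph.cExp_evenSh hv hr]
    exact shiftExponent_nonneg_and_eq_zero_iff i k
  refine ⟨fun hi => ?_, fun hi => ?_, fun hi => ?_⟩
  · rw [hsum, vanishingShifts, if_pos hi, Finset.sum_pair (by omega)]
  · subst hi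
    rw [hsum, vanishingShifts, if_neg (by omega), if_pos rfl, Finset.sum_singleton,
      WGraph.Ch.evenSh_zero]
  · rw [hsum, vanishingShifts, if_neg (by omega), if_neg (by omega), Finset.sum_pair (by omega)]

end
end
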